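/- Let T: S → S* be a continuous linear operator whose 2D-Fock transform satisfies |⟨⟨T e_σ, e_τ⟩⟩| ≤ C λ_σ^p λ_τ^p for all σ, τ ∈ Γ, for some constants C ≥ 0 and p ≥ 0. Then for every q > p + 1/2 there is a unique bounded linear operator T̃: S_q → S_q* extending T with operator norm ‖T̃‖ ≤ C · ∑_{σ∈Γ} λ_σ^{-2(q-p)}. -/

import Mathlib

/-!
In the `ℓ²`-model the matrix entries `a σ τ = λ_σ^{-q} λ_τ^{-q} G σ τ` are dominated by
`C w_σ w_τ` with `w_σ = λ_σ^{p-q}`, and `w ∈ ℓ²` because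
`∑_σ λ_σ^{-s} = ∏_k (1 + (1+k)^{-s})` converges for `s = 2(q-p) > 1`. By Cauchy–Schwarz the
double series `∑ a σ τ ξ_σ η_τ` then converges absolutely with modulus at most
`C ‖w‖² ‖ξ‖ ‖η‖`, which defines `T̃`; it is unique because finitely supported sequences are
dense in `ℓ²`.
-/

open scoped BigOperators

/-- `lam σ = ∏_{k∈σ} (1+k)`, with `lam ∅ = 1`. -/
noncomputable def lam (σ : Finset ℕ) : ℝ := ∏ k ∈ σ, (1 + k : ℝ)

/-- `ℓ²`-model of the weighted space `S_q`: the standard basis vector `lp.single 2 σ 1`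
corresponds to the orthonormal basis vector `λ_σ^{-q} e_σ` of `S_q`. -/
noncomputable abbrev Hmodel : Type := lp (fun _ : Finset ℕ => ℂ) 2

theorem lam_pos (σ : Finset ℕ) : 0 < lam σ :=
  Finset.prod_pos fun k _ => by positivity

theorem lam_rpow (σ : Finset ℕ) (s : ℝ) : lam σ ^ s = ∏ k ∈ σ, (1 + k : ℝ) ^ s :=
  (Real.finsetProd_rpow σ _ (fun k _ => by positivity) s).symm

theorem summable_lam_rpow_neg {s : ℝ} (hs : 1 < s) :
    Summable fun σ : Finset ℕ => lam σ ^ (-s) := by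
  have h : Summable fun k : ℕ => (1 + k : ℝ) ^ (-s) := by
    simpa [add_comm] using
      (summable_nat_add_iff 1).2 (Real.summable_nat_rpow.2 (neg_lt_neg hs))
  simpa only [lam_rpow] using
    summable_finsetProd_of_summable_nonneg (fun k => by positivity) h

section KernelForm

variable {ι 𝕜 : Type*} [RCLike 𝕜]

theorem summable_and_tsum_mul_norm_le {E : Type*} [NormedAddCommGroup E] {w : ι → ℝ}
    (hw0 : ∀ i, 0 ≤ w i) (hw : Summable fun i => w i ^ (2 : ℝ)) (ξ : lp (fun _ : ι => E) 2) :
    (Summable fun i => w i * ‖ξ i‖) ∧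
      ∑' i, w i * ‖ξ i‖ ≤ (∑' i, w i ^ (2 : ℝ)) ^ (1 / 2 : ℝ) * ‖ξ‖ := by
  have h2 : (0 : ℝ) < (2 : ENNReal).toReal := by norm_num
  have hξ := (lp.memℓp ξ).summable h2
  rw [lp.norm_eq_tsum_rpow h2]
  simp only [ENNReal.toReal_ofNat] at hξ ⊢
  exact Real.summable_and_inner_le_Lp_mul_Lq_tsum_of_nonneg .two_two hw0 (fun i => norm_nonneg _)
    hw hξ

variable {a : ι → ι → 𝕜} {w : ι → ℝ} {C : ℝ}

theorem norm_kernel_mul_le (ha : ∀ i j, ‖a i j‖ ≤ C * w i * w j) (i j : ι) (x y : 𝕜) :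
    ‖a i j * x * y‖ ≤ C * ((w i * ‖x‖) * (w j * ‖y‖)) := by
  rw [norm_mul, norm_mul]
  calc ‖a i j‖ * ‖x‖ * ‖y‖ ≤ C * w i * w j * ‖x‖ * ‖y‖ := by gcongr; exact ha i j
    _ = C * ((w i * ‖x‖) * (w j * ‖y‖)) := by ring

theorem summable_mul_norm_mul_norm (hw0 : ∀ i, 0 ≤ w i) (hw : Summable fun i => w i ^ (2 : ℝ))
    (ξ η : lp (fun _ : ι => 𝕜) 2) :
    Summable fun z : ι × ι => (w z.1 * ‖ξ z.1‖) * (w z.2 * ‖η z.2‖) :=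
  (summable_and_tsum_mul_norm_le hw0 hw ξ).1.mul_of_nonneg
    (summable_and_tsum_mul_norm_le hw0 hw η).1
    (fun i => mul_nonneg (hw0 i) (norm_nonneg _)) (fun j => mul_nonneg (hw0 j) (norm_nonneg _))

theorem summable_norm_kernel (hw0 : ∀ i, 0 ≤ w i) (hw : Summable fun i => w i ^ (2 : ℝ))
    (ha : ∀ i j, ‖a i j‖ ≤ C * w i * w j) (ξ η : lp (fun _ : ι => 𝕜) 2) :
    Summable fun z : ι × ι => ‖a z.1 z.2 * ξ z.1 * η z.2‖ :=
  .of_nonneg_of_le (fun _ => norm_nonneg _) (fun z => norm_kernel_mul_le ha z.1 z.2 _ _)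
    ((summable_mul_norm_mul_norm hw0 hw ξ η).mul_left C)

theorem norm_tsum_kernel_le (hC : 0 ≤ C) (hw0 : ∀ i, 0 ≤ w i)
    (hw : Summable fun i => w i ^ (2 : ℝ)) (ha : ∀ i j, ‖a i j‖ ≤ C * w i * w j)
    (ξ η : lp (fun _ : ι => 𝕜) 2) :
    ‖∑' z : ι × ι, a z.1 z.2 * ξ z.1 * η z.2‖ ≤ C * (∑' i, w i ^ (2 : ℝ)) * ‖ξ‖ * ‖η‖ := by
  set M := ∑' i, w i ^ (2 : ℝ)
  obtain ⟨hξ, hξM⟩ := summable_and_tsum_mul_norm_le hw0 hw ξ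
  obtain ⟨hη, hηM⟩ := summable_and_tsum_mul_norm_le hw0 hw η
  have hprod := summable_mul_norm_mul_norm hw0 hw ξ η
  have hM0 : 0 ≤ M := tsum_nonneg fun i => Real.rpow_nonneg (hw0 i) _
  calc ‖∑' z : ι × ι, a z.1 z.2 * ξ z.1 * η z.2‖
      ≤ ∑' z : ι × ι, ‖a z.1 z.2 * ξ z.1 * η z.2‖ :=
        norm_tsum_le_tsum_norm (summable_norm_kernel hw0 hw ha ξ η)
    _ ≤ ∑' z : ι × ι, C * ((w z.1 * ‖ξ z.1‖) * (w z.2 * ‖η z.2‖)) :=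
        (summable_norm_kernel hw0 hw ha ξ η).tsum_le_tsum
          (fun z => norm_kernel_mul_le ha z.1 z.2 _ _) (hprod.mul_left C)
    _ = C * ((∑' i, w i * ‖ξ i‖) * ∑' j, w j * ‖η j‖) := by
        rw [tsum_mul_left, hξ.tsum_mul_tsum hη hprod]
    _ ≤ C * ((M ^ (1 / 2 : ℝ) * ‖ξ‖) * (M ^ (1 / 2 : ℝ) * ‖η‖)) := by
        gcongr
        exact tsum_nonneg fun j => mul_nonneg (hw0 j) (norm_nonneg _)
    _ = C * M * ‖ξ‖ * ‖η‖ := by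
        rw [← Real.sqrt_eq_rpow]
        linear_combination C * ‖ξ‖ * ‖η‖ * Real.mul_self_sqrt hM0

theorem exists_clm_single_single_eq_and_norm_le [DecidableEq ι] (hC : 0 ≤ C) (hw0 : ∀ i, 0 ≤ w i)
    (hw : Summable fun i => w i ^ (2 : ℝ)) (ha : ∀ i j, ‖a i j‖ ≤ C * w i * w j) :
    ∃ T : lp (fun _ : ι => 𝕜) 2 →L[𝕜] StrongDual 𝕜 (lp (fun _ : ι => 𝕜) 2),
      (∀ i j, T (lp.single 2 i 1) (lp.single 2 j 1) = a i j) ∧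
        ‖T‖ ≤ C * ∑' i, w i ^ (2 : ℝ) := by
  have hs ξ η := (summable_norm_kernel hw0 hw ha ξ η).of_norm
  let B : lp (fun _ : ι => 𝕜) 2 →ₗ[𝕜] lp (fun _ : ι => 𝕜) 2 →ₗ[𝕜] 𝕜 := LinearMap.mk₂ 𝕜
    (fun ξ η => ∑' z : ι × ι, a z.1 z.2 * ξ z.1 * η z.2)
    (fun ξ ξ' η => by
      simp only [lp.coeFn_add, Pi.add_apply, mul_add, add_mul]
      exact (hs ξ η).tsum_add (hs ξ' η))
    (fun c ξ η => by
      simp only [lp.coeFn_smul, Pi.smul_apply, smul_eq_mul, ← tsum_mul_left]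
      exact tsum_congr fun z => by ring)
    (fun ξ η η' => by
      simp only [lp.coeFn_add, Pi.add_apply, mul_add]
      exact (hs ξ η).tsum_add (hs ξ η'))
    (fun c ξ η => by
      simp only [lp.coeFn_smul, Pi.smul_apply, smul_eq_mul, ← tsum_mul_left]
      exact tsum_congr fun z => by ring)
  have hM0 : 0 ≤ ∑' i, w i ^ (2 : ℝ) := tsum_nonneg fun i => Real.rpow_nonneg (hw0 i) _
  refine ⟨B.mkContinuous₂ _ (norm_tsum_kernel_le hC hw0 hw ha), fun i j => ?_,
    LinearMap.mkContinuous₂_norm_le _ (mul_nonneg hC hM0) _⟩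
  change ∑' z : ι × ι, a z.1 z.2 * (lp.single 2 i 1 : ι → 𝕜) z.1 * (lp.single 2 j 1 : ι → 𝕜) z.2
    = a i j
  rw [tsum_eq_single (i, j)]
  · simp
  · rintro ⟨k, l⟩ hkl
    rcases eq_or_ne k i with rfl | hki
    · have hlj : l ≠ j := fun hlj => hkl (by rw [hlj])
      rw [lp.single_apply_ne 2 j _ hlj, mul_zero]
    · rw [lp.single_apply_ne 2 i _ hki, mul_zero, zero_mul]

end KernelForm

theorem lp.ext_single_one {ι 𝕜 F : Type*} [NormedField 𝕜] [DecidableEq ι] {p : ENNReal}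
    [Fact (1 ≤ p)] (hp : p ≠ ⊤) [AddCommMonoid F] [Module 𝕜 F] [TopologicalSpace F] [T2Space F]
    {f g : lp (fun _ : ι => 𝕜) p →L[𝕜] F} (h : ∀ i, f (lp.single p i 1) = g (lp.single p i 1)) :
    f = g :=
  lp.ext_continuousLinearMap hp fun i => ContinuousLinearMap.ext_ring (h i)

theorem norm_lam_rpow_mul_le {C p q : ℝ} {σ τ : Finset ℕ} {z : ℂ}
    (hz : ‖z‖ ≤ C * lam σ ^ p * lam τ ^ p) :
    ‖((lam σ ^ (-q) * lam τ ^ (-q) : ℝ) : ℂ) * z‖ ≤ C * lam σ ^ (p - q) * lam τ ^ (p - q) := by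
  have hσ := lam_pos σ
  have hτ := lam_pos τ
  have hστ : 0 ≤ lam σ ^ (-q) * lam τ ^ (-q) := by positivity
  rw [norm_mul, Complex.norm_real, Real.norm_of_nonneg hστ, sub_eq_neg_add,
    Real.rpow_add hσ, Real.rpow_add hτ]
  calc lam σ ^ (-q) * lam τ ^ (-q) * ‖z‖
      ≤ lam σ ^ (-q) * lam τ ^ (-q) * (C * lam σ ^ p * lam τ ^ p) := by gcongr
    _ = C * (lam σ ^ (-q) * lam σ ^ p) * (lam τ ^ (-q) * lam τ ^ p) := by ring

theorem stmt5_general (C p : ℝ) (hC : 0 ≤ C) (G : Finset ℕ → Finset ℕ → ℂ)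
    (hG : ∀ σ τ : Finset ℕ, ‖G σ τ‖ ≤ C * lam σ ^ p * lam τ ^ p)
    (q : ℝ) (hq : q > p + 1 / 2) :
    ∃ T : Hmodel →L[ℂ] StrongDual ℂ Hmodel,
      (∀ σ τ : Finset ℕ,
        T (lp.single 2 σ (1 : ℂ)) (lp.single 2 τ (1 : ℂ))
          = ((lam σ ^ (-q) * lam τ ^ (-q) : ℝ) : ℂ) * G σ τ) ∧
      ‖T‖ ≤ C * ∑' σ : Finset ℕ, lam σ ^ (-(2 * (q - p))) ∧
      ∀ T' : Hmodel →L[ℂ] StrongDual ℂ Hmodel,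
        (∀ σ τ : Finset ℕ,
          T' (lp.single 2 σ (1 : ℂ)) (lp.single 2 τ (1 : ℂ))
            = ((lam σ ^ (-q) * lam τ ^ (-q) : ℝ) : ℂ) * G σ τ) → T' = T := by
  have hw2 (σ : Finset ℕ) : (lam σ ^ (p - q)) ^ (2 : ℝ) = lam σ ^ (-(2 * (q - p))) := by
    rw [← Real.rpow_mul (lam_pos σ).le]
    ring_nf
  have hw : Summable fun σ => (lam σ ^ (p - q)) ^ (2 : ℝ) := by
    simpa only [hw2] using summable_lam_rpow_neg (s := 2 * (q - p)) (by linarith)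
  obtain ⟨T, hT, hTnorm⟩ := exists_clm_single_single_eq_and_norm_le hC
    (fun σ => Real.rpow_nonneg (lam_pos σ).le _) hw fun σ τ => norm_lam_rpow_mul_le (hG σ τ)
  refine ⟨T, hT, by simpa only [hw2] using hTnorm, fun T' hT' => ?_⟩
  refine lp.ext_single_one (by simp) fun σ => lp.ext_single_one (by simp) fun τ => ?_
  rw [hT' σ τ, hT σ τ]

/-- **Technical theorem.** If `T : S → S*` is a continuous linear operator whose 2D-Fock
transform `G(σ,τ) = ⟨⟨T e_σ, e_τ⟩⟩` satisfies `|G(σ,τ)| ≤ C λ_σ^p λ_τ^p`, then for every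
`q > p + 1/2` there is a unique bounded operator `T̃ : S_q → S_q*` extending `T` (i.e.
having the same matrix elements `⟨⟨T̃(λ_σ^{-q}e_σ), λ_τ^{-q}e_τ⟩⟩ = λ_σ^{-q}λ_τ^{-q}G(σ,τ)`
in the `ℓ²`-model) with `‖T̃‖ ≤ C ∑_{σ∈Γ} λ_σ^{-2(q-p)}`. -/
theorem stmt5 (C p : ℝ) (hC : 0 ≤ C) (hp : 0 ≤ p) (G : Finset ℕ → Finset ℕ → ℂ)
    (hG : ∀ σ τ : Finset ℕ, ‖G σ τ‖ ≤ C * lam σ ^ p * lam τ ^ p)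
    (q : ℝ) (hq : q > p + 1 / 2) :
    ∃ T : Hmodel →L[ℂ] StrongDual ℂ Hmodel,
      (∀ σ τ : Finset ℕ,
        T (lp.single 2 σ (1 : ℂ)) (lp.single 2 τ (1 : ℂ))
          = ((lam σ ^ (-q) * lam τ ^ (-q) : ℝ) : ℂ) * G σ τ) ∧
      ‖T‖ ≤ C * ∑' σ : Finset ℕ, lam σ ^ (-(2 * (q - p))) ∧
      ∀ T' : Hmodel →L[ℂ] StrongDual ℂ Hmodel,
        (∀ σ τ : Finset ℕ,
          T' (lp.single 2 σ (1 : ℂ)) (lp.single 2 τ (1 : ℂ))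
            = ((lam σ ^ (-q) * lam τ ^ (-q) : ℝ) : ℂ) * G σ τ) → T' = T :=
  stmt5_general C p hC G hG q hq
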